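/- Let A_Γ be a T-algebra with the ScP. If ⟨x_n : n ∈ ℕ⟩ is an injective sequence in X(Γ) that converges in the Stone topology to a point z ∈ X(Γ), then λ_z < ω₁, i.e., z ∈ X(Γ,ℵ₀). -/

import Mathlib

open Set

noncomputable section

/-- The least uncountable ordinal `ω₁`. -/
def omega1 : Ordinal := (Cardinal.aleph 1).ord

/-- `⋃_{γ ∈ F} a_γ` for a finite set `F` of indices. -/
def unionFin (a : Ordinal → Set ℕ) (F : Finset Ordinal) : Set ℕ :=
  ⋃ γ ∈ F, a γ

/-- A sequence of subsets of `ℕ`, with indices from a (downward closed) domain `D`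
of ordinals, is coherent if for all `α ≤ β` in the domain there is a finite `F ⊆ α`
with `a α ∩ a β ⊆ ⋃_{γ∈F} a γ` or `a α ⊆ a β ∪ ⋃_{γ∈F} a γ`. -/
def CoherentOn (D : Set Ordinal) (a : Ordinal → Set ℕ) : Prop :=
  ∀ α β : Ordinal, α ≤ β → β ∈ D →
    ∃ F : Finset Ordinal, (∀ γ ∈ F, γ < α) ∧
      (a α ∩ a β ⊆ unionFin a F ∨ a α ⊆ a β ∪ unionFin a F)

/-- Properness: no `a β` is contained in a finite union of earlier terms. -/
def ProperOn (D : Set Ordinal) (a : Ordinal → Set ℕ) : Prop :=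
  ∀ β ∈ D, ∀ F : Finset Ordinal, (∀ γ ∈ F, γ < β) → ¬ a β ⊆ unionFin a F

/-- `â_β = { α ≤ β : a α ∖ a β ⊆ ⋃_{γ∈F} a γ for some finite F ⊆ α }`. -/
def hatA (a : Ordinal → Set ℕ) (β : Ordinal) : Set Ordinal :=
  { α | α ≤ β ∧ ∃ F : Finset Ordinal, (∀ γ ∈ F, γ < α) ∧ a α \ a β ⊆ unionFin a F }

/-- The topology `τ(A)` on `λ + 1 = {α : α ≤ λ}` generated by the subbase
consisting of the sets `â_β` and their complements, `β < λ`. -/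
def tau (lam : Ordinal) (a : Ordinal → Set ℕ) :
    TopologicalSpace {α : Ordinal // α ≤ lam} :=
  TopologicalSpace.generateFrom
    { s | ∃ β < lam, s = {x : {α : Ordinal // α ≤ lam} | x.1 ∈ hatA a β} ∨
                     s = {x : {α : Ordinal // α ≤ lam} | x.1 ∈ hatA a β}ᶜ }

/-- The subspace `ω₁ = {α : α < ω₁}` of `(ω₁+1, τ(A))`. -/
def tauSub (a : Ordinal → Set ℕ) : TopologicalSpace {y : Ordinal // y < omega1} :=
  TopologicalSpace.induced
    (fun y : {y : Ordinal // y < omega1} => (⟨y.1, y.2.le⟩ : {α : Ordinal // α ≤ omega1}))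
    (tau omega1 a)

/-- Closed unbounded subsets of `ω₁`. -/
def IsClubOmega1 (C : Set Ordinal) : Prop :=
  C ⊆ Iio omega1 ∧
  (∀ α < omega1, ∃ β ∈ C, α ≤ β) ∧
  (∀ δ, δ < omega1 → δ ≠ 0 → (∀ α < δ, ∃ β ∈ C, α < β ∧ β < δ) → δ ∈ C)

/-- Stationary subsets of `ω₁`: sets meeting every club. -/
def IsStationaryOmega1 (S : Set Ordinal) : Prop :=
  ∀ C : Set Ordinal, IsClubOmega1 C → (S ∩ C).Nonempty

/-- The stationary covering property for a coherent sequence whose index domain is `D`: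
if the sequence has length `ω₁` (i.e. `Iio ω₁ ⊆ D`), then every stationary `S ⊆ ω₁`
together with some finite `F` covers, i.e. `⋃_{γ ∈ S ∪ F} â_γ = ω₁`.  (Sequences of
length `< ω₁` have the ScP by convention.) -/
def HasScP (D : Set Ordinal) (a : Ordinal → Set ℕ) : Prop :=
  Iio omega1 ⊆ D →
    ∀ S : Set Ordinal, S ⊆ Iio omega1 → IsStationaryOmega1 S →
      ∃ F : Finset Ordinal, (⋃ γ ∈ S ∪ (↑F : Set Ordinal), hatA a γ) = Iio omega1

/-- A node of the tree `2^{≤ω₁}`: a function `val` defined on the ordinals `< len`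
(with the canonical value `false` beyond `len`). -/
structure Node where
  len : Ordinal
  val : Ordinal → Bool
  canon : ∀ α, len ≤ α → val α = false

open Classical in
/-- The restriction `x ↾ β`. -/
def Node.restrict (x : Node) (β : Ordinal) : Node where
  len := β
  val := fun α => if α < β then x.val α else false
  canon := fun α h => if_neg (not_lt.2 h)

/-- `τ.Extends σ` means `σ ⊆ τ`, i.e. `τ` extends `σ`. -/
def Node.Extends (τ σ : Node) : Prop :=
  σ.len ≤ τ.len ∧ ∀ α < σ.len, τ.val α = σ.val α

/-- Successor ordinals. -/
def IsSucc (o : Ordinal) : Prop := ∃ β, o = β + 1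

open Classical in
/-- `σ†`: if `σ` has successor length `β+1`, the node agreeing with `σ` except at `β`;
otherwise `σ` itself. -/
def Node.dagger (σ : Node) : Node :=
  if h : IsSucc σ.len then
    { len := σ.len
      val := fun α => if α = Classical.choose h then !(σ.val α) else σ.val α
      canon := by
        intro α hα
        have hs := Classical.choose_spec h
        have hne : α ≠ Classical.choose h := by
          intro he
          rw [hs, he] at hα
          rw [Ordinal.add_one_eq_succ] at hα
          exact not_le.2 (Order.lt_succ (Classical.choose h)) hα
        show (if α = Classical.choose h then !(σ.val α) else σ.val α) = false
        rw [if_neg hne]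
        exact σ.canon α hα }
  else σ

open Classical in
/-- `σ ⌢ b` : the node `σ` extended by one value `b`. -/
def Node.snoc (σ : Node) (b : Bool) : Node where
  len := σ.len + 1
  val := fun α => if α = σ.len then b else σ.val α
  canon := by
    intro α hα
    have h1 : σ.len < α := by
      have h2 : σ.len < σ.len + 1 := by
        rw [Ordinal.add_one_eq_succ]; exact Order.lt_succ σ.len
      exact lt_of_lt_of_le h2 hα
    show (if α = σ.len then b else σ.val α) = false
    rw [if_neg h1.ne']
    exact σ.canon α h1.le

open Classical in
/-- `x ⌢ σ` : concatenation of nodes. -/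
def Node.append (x σ : Node) : Node where
  len := x.len + σ.len
  val := fun α => if α < x.len then x.val α else σ.val (α - x.len)
  canon := by
    intro α hα
    have h1 : ¬ α < x.len := not_lt.2 (le_trans (le_add_of_nonneg_right (zero_le (a := σ.len))) hα)
    show (if α < x.len then x.val α else σ.val (α - x.len)) = false
    rw [if_neg h1]
    apply σ.canon
    by_contra h2
    rw [not_le] at h2
    have h3 : α ≤ x.len + (α - x.len) := Ordinal.le_add_sub α x.len
    have h4 : x.len + (α - x.len) < x.len + σ.len := (add_lt_add_iff_left x.len).2 h2
    exact absurd hα (not_le.2 (lt_of_le_of_lt h3 h4))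

/-- A subtree of `2^{<ω₁}` that is downward closed, twinned and has no maximal elements. -/
structure GoodTree (Γ : Set Node) : Prop where
  lt_omega1 : ∀ σ ∈ Γ, σ.len < omega1
  downward : ∀ σ ∈ Γ, ∀ β ≤ σ.len, σ.restrict β ∈ Γ
  twinned : ∀ σ ∈ Γ, σ.dagger ∈ Γ
  noMax : ∀ σ ∈ Γ, ∃ τ ∈ Γ, σ.len < τ.len ∧ τ.Extends σ

/-- `X(Γ)`: the maximal branches of `Γ`, i.e. the minimal elements of `2^{≤ω₁} ∖ Γ`. -/
def XGamma (Γ : Set Node) : Set Node :=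
  { x | x.len ≤ omega1 ∧ x ∉ Γ ∧ ∀ β < x.len, x.restrict β ∈ Γ }

/-- The index domain of the branch sequence `A_{Γ,x}`. -/
def branchDomain (Γ : Set Node) (x : Node) : Set Ordinal :=
  { α | α + 1 ≤ x.len ∧ x.restrict (α + 1) ∈ Γ }

/-- The branch sequence `A_{Γ,x}`, `a^x_α = a_{x ↾ (α+1)}`. -/
def branchSeq (a : Node → Set ℕ) (x : Node) : Ordinal → Set ℕ :=
  fun α => a (x.restrict (α + 1))

/-- A `𝕋`-algebra on the tree `Γ`. -/
structure IsTAlgebra (Γ : Set Node) (a : Node → Set ℕ) : Prop where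
  tree : GoodTree Γ
  empty_of_not_succ : ∀ σ ∈ Γ, ¬ IsSucc σ.len → a σ = ∅
  compl_dagger : ∀ σ ∈ Γ, IsSucc σ.len → a σ.dagger = (a σ)ᶜ
  branch_coherent : ∀ x : Node, x.len ≤ omega1 →
    CoherentOn (branchDomain Γ x) (branchSeq a x)
  branch_proper : ∀ x : Node, x.len ≤ omega1 →
    ProperOn (branchDomain Γ x) (branchSeq a x)

/-- The Boolean subalgebra of `P(ℕ)` generated by a family `G`. -/
inductive GenBool (G : Set (Set ℕ)) : Set ℕ → Prop
  | basic (s : Set ℕ) : s ∈ G → GenBool G s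
  | empty : GenBool G ∅
  | compl (s : Set ℕ) : GenBool G s → GenBool G sᶜ
  | inter (s t : Set ℕ) : GenBool G s → GenBool G t → GenBool G (s ∩ t)

/-- `B_Γ`: the Boolean subalgebra of `P(ℕ)` generated by `{a_σ : σ ∈ Γ}`. -/
def BGamma (Γ : Set Node) (a : Node → Set ℕ) : Set (Set ℕ) :=
  { b | GenBool { s | ∃ σ ∈ Γ, s = a σ } b }

/-- A finite intersection from the family `{ℕ ∖ a_{x↾(α+1)} : α + 1 ≤ λ_x}`. -/
def finInterCompl (a : Node → Set ℕ) (x : Node) (F : Finset Ordinal) : Set ℕ :=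
  ⋂ α ∈ F, (a (x.restrict (α + 1)))ᶜ

/-- The ultrafilter `U_x` on `B_Γ` generated by the finite intersections of
`{ℕ ∖ a_{x↾(α+1)} : α + 1 ≤ λ_x}`. -/
def Ux (Γ : Set Node) (a : Node → Set ℕ) (x : Node) : Set (Set ℕ) :=
  { b | b ∈ BGamma Γ a ∧
    ∃ F : Finset Ordinal, (∀ α ∈ F, α + 1 ≤ x.len) ∧ finInterCompl a x F ⊆ b }

/-- The Stone topology on `X(Γ)`, with subbasic open sets `{z : b ∈ U_z}`, `b ∈ B_Γ`. -/
def stoneTop (Γ : Set Node) (a : Node → Set ℕ) :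
    TopologicalSpace {z : Node // z ∈ XGamma Γ} :=
  TopologicalSpace.generateFrom
    { s | ∃ b ∈ BGamma Γ a, s = { z : {z : Node // z ∈ XGamma Γ} | b ∈ Ux Γ a z.1 } }

/-- An ultrafilter on a Boolean subalgebra `B` of `P(ℕ)`. -/
def IsUltrafilterOn (B U : Set (Set ℕ)) : Prop :=
  U ⊆ B ∧
  (∀ s ∈ U, ∀ t ∈ U, s ∩ t ∈ U) ∧
  (∀ s ∈ U, ∀ t ∈ B, s ⊆ t → t ∈ U) ∧
  ∅ ∉ U ∧
  (∀ b ∈ B, Xor' (b ∈ U) (bᶜ ∈ U))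

/-- The length-lexicographic (strict) order on finite binary strings. -/
def LenLexLT (σ τ : Node) : Prop :=
  σ.len < τ.len ∨ (σ.len = τ.len ∧ ∃ i < σ.len, σ.val i = false ∧ τ.val i = true ∧
    ∀ j < i, σ.val j = τ.val j)

/-- `e` is the standard length-lexicographic enumeration of `2^{<ω}`. -/
def IsStdEnum (e : ℕ → Node) : Prop :=
  (∀ k, (e k).len < Ordinal.omega0) ∧
  (∀ σ : Node, σ.len < Ordinal.omega0 → ∃ k, e k = σ) ∧
  (∀ k l : ℕ, k < l → LenLexLT (e k) (e l))

/-- `⋃_{k<n} c^x_k` where `c^x_n = a^x_{e(n)} ∖ ⋃_{k<n} c^x_k` (recursively). -/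
def cUnion (a : Node → Set ℕ) (x : Node) (eb : ℕ → Ordinal) : ℕ → Set ℕ
  | 0 => ∅
  | n + 1 => cUnion a x eb n ∪ (a (x.restrict (eb n + 1)) \ cUnion a x eb n)

/-- `c^x_n = a^x_{e(n)} ∖ ⋃_{k<n} c^x_k`. -/
def cSeq (a : Node → Set ℕ) (x : Node) (eb : ℕ → Ordinal) (n : ℕ) : Set ℕ :=
  a (x.restrict (eb n + 1)) \ cUnion a x eb n

/-- `{x ⌢ σ : σ ∈ 2^{<ω}}`. -/
def appendSet (x : Node) : Set Node :=
  { τ | ∃ σ : Node, σ.len < Ordinal.omega0 ∧ τ = x.append σ }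

/-- The defining equations of the extension `A_Γ[π,x]`:
`a_x = ∅`, `a_{x⌢(σ⌢0)} = ⋃{c^x_k : σ⌢1 ⊆ σ_{π(k)}}`, `a_{x⌢(σ⌢1)} = ℕ ∖ a_{x⌢(σ⌢0)}`. -/
def ExtEquations (e : ℕ → Node) (π : ℕ → ℕ) (a : Node → Set ℕ) (x : Node)
    (eb : ℕ → Ordinal) (a' : Node → Set ℕ) : Prop :=
  a' x = ∅ ∧
  ∀ σ : Node, σ.len < Ordinal.omega0 →
    (a' (x.append (σ.snoc false)) =
      ⋃ k ∈ { k : ℕ | (e (π k)).Extends (σ.snoc true) }, cSeq a x eb k) ∧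
    (a' (x.append (σ.snoc true)) = (a' (x.append (σ.snoc false)))ᶜ)

/-- The full tree `2^{<ω₁}`. -/
def GammaFull : Set Node := { σ | σ.len < omega1 }

theorem natLtOmega1 (n : ℕ) : (n : Ordinal) < omega1 := by
  have h1 : (n : Ordinal) < Ordinal.omega0 := Ordinal.nat_lt_omega0 n
  have h2 : Ordinal.omega0 < omega1 := by
    rw [omega1, ← Cardinal.ord_aleph0]
    exact Cardinal.ord_lt_ord.2 (by rw [← Cardinal.aleph_zero]
                                    exact Cardinal.aleph_lt_aleph.2 zero_lt_one)
  exact h1.trans h2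

/-!
Suppose `λ_z = ω₁`. For every `γ < ω₁` the set `ℕ ∖ a_{z↾(γ+1)}` lies in `U_z`, hence in
`U_{x_n}` for all `n` beyond some `N(γ)`. Since countably many nonstationary sets cannot cover `ω₁`,
`S = {γ : N(γ) ≤ m}` is stationary for some `m`, and the ScP of `A_{Γ,z}` yields a finite `F` with
`⋃_{γ ∈ S ∪ F} â^z_γ = ω₁`. Pick `n ≥ m` beyond `N(γ)` for `γ ∈ F` with `x_n ≠ z`, and let `δ` be
the level where `x_n` leaves `z`. Then `δ ∈ â^z_γ` for some `γ ∈ S ∪ F`, which puts `a_{z↾(γ+1)}`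
into `U_{x_n}`; but its complement is there as well, contradicting the properness of `A_{Γ,x_n}`.
-/

theorem succ_lt_omega1 {α : Ordinal} (h : α < omega1) : α + 1 < omega1 :=
  (Cardinal.isSuccLimit_ord Cardinal.aleph0_lt_aleph_one.le).add_one_lt h

theorem Ordinal.add_one_injective : Function.Injective fun α : Ordinal => α + 1 := by
  simpa only [← Order.succ_eq_add_one] using Order.succ_injective

theorem cof_Iio_omega1_ne_aleph0 : Order.cof (Iio omega1) ≠ Cardinal.aleph0 := by
  rw [Ordinal.cof_Iio, ← Ordinal.lift_cof, omega1, Cardinal.isRegular_aleph_one.cof_ord]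
  simpa using Cardinal.aleph0_lt_aleph_one.ne'

theorem IsClubOmega1.isClub_preimage {C : Set Ordinal} (hC : IsClubOmega1 C) :
    IsClub (((↑) : Iio omega1 → Ordinal) ⁻¹' C) := by
  obtain ⟨hCsub, hCunb, hCclosed⟩ := hC
  refine ⟨dirSupClosed_iff_of_linearOrder.2 fun d hdC ⟨b, hbd⟩ c hc => ?_, fun x => ?_⟩
  · by_cases hcd : c ∈ d
    · exact hdC hcd
    have lt_of_mem : ∀ β ∈ d, β.1 < c.1 := fun β hβ =>
      lt_of_le_of_ne (hc.1 hβ) fun h => hcd (Subtype.ext h ▸ hβ)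
    refine hCclosed c.1 c.2 (lt_of_mem b hbd).ne_bot fun α hα => ?_
    obtain ⟨β, hβd, hαβ⟩ : ∃ β ∈ d, α < β.1 := by
      by_contra! h
      exact hα.not_ge (hc.2 (show (⟨α, hα.trans c.2⟩ : Iio omega1) ∈ upperBounds d from h))
    exact ⟨β, hdC hβd, hαβ, lt_of_mem β hβd⟩
  · obtain ⟨β, hβC, hxβ⟩ := hCunb x.1 x.2
    exact ⟨⟨β, hCsub hβC⟩, hβC, hxβ⟩

theorem IsStationary.isStationaryOmega1 {S : Set Ordinal}
    (hS : IsStationary (((↑) : Iio omega1 → Ordinal) ⁻¹' S)) : IsStationaryOmega1 S := by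
  intro C hC
  obtain ⟨x, hx⟩ := hS hC.isClub_preimage
  exact ⟨x, hx⟩

theorem exists_isStationaryOmega1_of_cover (S : ℕ → Set Ordinal)
    (hS : ∀ γ < omega1, ∃ m, γ ∈ S m) : ∃ m, IsStationaryOmega1 (S m) := by
  have hcover : (⋃ m, ((↑) : Iio omega1 → Ordinal) ⁻¹' S m) = univ :=
    eq_univ_of_forall fun γ => mem_iUnion.2 (hS γ.1 γ.2)
  have : Nonempty (Iio omega1) := ⟨⟨0, by simpa using natLtOmega1 0⟩⟩
  obtain ⟨m, hm⟩ := (isStationary_iUnion_iff_of_countable cof_Iio_omega1_ne_aleph0).1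
    (hcover ▸ IsStationary.univ)
  exact ⟨m, hm.isStationaryOmega1⟩

namespace Node

@[ext]
theorem ext {x y : Node} (hlen : x.len = y.len) (hval : x.val = y.val) : x = y := by
  cases x; cases y; cases hlen; cases hval; rfl

theorem restrict_len_self (x : Node) : x.restrict x.len = x := by
  ext α
  · rfl
  · simp only [restrict, ite_eq_left_iff, not_lt]
    exact fun h => (x.canon α h).symm

theorem restrict_eq_restrict {x y : Node} {β : Ordinal} (h : ∀ α < β, x.val α = y.val α) :
    x.restrict β = y.restrict β := by
  ext α
  · rfl
  · simp only [restrict]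
    split_ifs with hα
    exacts [h α hα, rfl]

theorem dagger_len (σ : Node) : σ.dagger.len = σ.len := by
  unfold dagger; split <;> rfl

theorem dagger_val {σ : Node} {β : Ordinal} (h : σ.len = β + 1) (α : Ordinal) :
    σ.dagger.val α = if α = β then !σ.val α else σ.val α := by
  have hs : IsSucc σ.len := ⟨β, h⟩
  have hchoose : Classical.choose hs = β :=
    Ordinal.add_one_injective ((Classical.choose_spec hs).symm.trans h)
  simp only [dagger, dif_pos hs, hchoose]

theorem dagger_snoc (σ : Node) (b : Bool) : (σ.snoc b).dagger = σ.snoc !b := by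
  ext α
  · exact dagger_len _
  · rw [dagger_val rfl]
    simp only [snoc]
    split_ifs <;> rfl

theorem restrict_succ_eq_dagger {x y : Node} {δ : Ordinal} (hagree : ∀ α < δ, x.val α = y.val α)
    (hδ : x.val δ ≠ y.val δ) : x.restrict (δ + 1) = (y.restrict (δ + 1)).dagger := by
  ext α
  · rw [dagger_len]; rfl
  · rw [dagger_val rfl]
    simp only [restrict, Order.lt_add_one_iff]
    rcases lt_trichotomy α δ with h | rfl | h
    · simp [h.le, h.ne, hagree α h]
    · simpa [Bool.eq_not] using hδ
    · simp [h.not_ge, h.ne']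

theorem Extends.restrict_add_one {τ σ : Node} (h : τ.Extends σ) :
    τ.restrict (σ.len + 1) = σ.snoc (τ.val σ.len) := by
  ext α
  · rfl
  · simp only [restrict, snoc, Order.lt_add_one_iff]
    rcases lt_trichotomy α σ.len with hα | rfl | hα
    · simp [hα.le, hα.ne, h.2 α hα]
    · simp
    · simp [hα.not_ge, hα.ne', σ.canon α hα.le]

theorem extends_restrict (x : Node) {β : Ordinal} (hβ : β ≤ x.len) :
    x.Extends (x.restrict β) :=
  ⟨hβ, fun _ hα => (if_pos hα).symm⟩

theorem exists_first_diff {Γ : Set Node} {y z : Node} (hy : y ∉ Γ)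
    (hz : ∀ β < z.len, z.restrict β ∈ Γ) (hlen : y.len ≤ z.len) (hne : y ≠ z) :
    ∃ δ < y.len, (∀ α < δ, y.val α = z.val α) ∧ y.val δ ≠ z.val δ := by
  have hdiff : {δ | δ < y.len ∧ y.val δ ≠ z.val δ}.Nonempty := by
    by_contra! h
    have hyz : y = z.restrict y.len := y.restrict_len_self.symm.trans
      (restrict_eq_restrict fun α hα => not_not.1 fun hne => h.subset ⟨hα, hne⟩)
    rcases hlen.lt_or_eq with hlt | heq
    · exact hy (hyz ▸ hz _ hlt)
    · exact hne (hyz.trans (heq ▸ z.restrict_len_self))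
  obtain ⟨δ, ⟨hδ, hδne⟩, hmin⟩ := wellFounded_lt.has_min _ hdiff
  exact ⟨δ, hδ, fun α hα => not_not.1 fun h => hmin α ⟨hα.trans hδ, h⟩ hα, hδne⟩

end Node

namespace GoodTree

variable {Γ : Set Node}

theorem snoc_mem (hΓ : GoodTree Γ) {σ : Node} (hσ : σ ∈ Γ) (b : Bool) : σ.snoc b ∈ Γ := by
  obtain ⟨τ, hτ, hlen, hext⟩ := hΓ.noMax σ hσ
  have hmem : σ.snoc (τ.val σ.len) ∈ Γ :=
    hext.restrict_add_one ▸ hΓ.downward τ hτ _ (Order.add_one_le_iff.2 hlen)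
  obtain rfl | rfl : b = τ.val σ.len ∨ b = !τ.val σ.len := by
    cases b <;> cases τ.val σ.len <;> simp
  · exact hmem
  · exact σ.dagger_snoc _ ▸ hΓ.twinned _ hmem

theorem not_isSucc_len (hΓ : GoodTree Γ) {y : Node} (hy : y ∈ XGamma Γ) : ¬ IsSucc y.len := by
  rintro ⟨β, hβ⟩
  have hβy : β < y.len := hβ ▸ Order.lt_add_one_iff.2 le_rfl
  have hsnoc := (y.extends_restrict hβy.le).restrict_add_one
  rw [show (y.restrict β).len = β from rfl, ← hβ, y.restrict_len_self] at hsnoc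
  exact hy.2.1 (hsnoc ▸ hΓ.snoc_mem (hy.2.2 β hβy) _)

theorem add_one_lt_len (hΓ : GoodTree Γ) {y : Node} (hy : y ∈ XGamma Γ) {α : Ordinal}
    (hα : α < y.len) : α + 1 < y.len :=
  (Order.add_one_le_iff.2 hα).lt_of_ne fun h => hΓ.not_isSucc_len hy ⟨α, h.symm⟩

end GoodTree

theorem finInterCompl_anti {a : Node → Set ℕ} {y : Node} {F G : Finset Ordinal} (h : F ⊆ G) :
    finInterCompl a y G ⊆ finInterCompl a y F :=
  biInter_subset_biInter_left fun _ hα => h hα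

namespace IsTAlgebra

variable {Γ : Set Node} {a : Node → Set ℕ}

theorem finInterCompl_nonempty (hT : IsTAlgebra Γ a) {y : Node} (hy : y ∈ XGamma Γ)
    {G : Finset Ordinal} (hG : ∀ α ∈ G, α + 1 ≤ y.len) : (finInterCompl a y G).Nonempty := by
  rcases G.eq_empty_or_nonempty with rfl | hne
  · simp [finInterCompl]
  set μ := G.max' hne
  have hμ : μ + 1 < y.len :=
    hT.tree.add_one_lt_len hy (Order.add_one_le_iff.1 (hG μ (G.max'_mem hne)))
  -- properness at the index `μ + 1`, which exists because `λ_y` is a limit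
  have hdom : μ + 1 ∈ branchDomain Γ y :=
    ⟨(hT.tree.add_one_lt_len hy hμ).le, hy.2.2 _ (hT.tree.add_one_lt_len hy hμ)⟩
  obtain ⟨p, -, hp⟩ := not_subset.1 <| hT.branch_proper y hy.1 (μ + 1) hdom G
    fun γ hγ => (G.le_max' γ hγ).trans_lt (Order.lt_add_one_iff.2 le_rfl)
  refine ⟨p, mem_iInter₂.2 fun α hα hpα => hp ?_⟩
  exact mem_biUnion hα hpα

theorem compl_notMem_Ux (hT : IsTAlgebra Γ a) {y : Node} (hy : y ∈ XGamma Γ) {b : Set ℕ}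
    (hb : b ∈ Ux Γ a y) : bᶜ ∉ Ux Γ a y := by
  rintro ⟨-, G, hG, hGb⟩
  obtain ⟨-, F, hF, hFb⟩ := hb
  obtain ⟨p, hp⟩ := hT.finInterCompl_nonempty hy (G := F ∪ G) fun α hα =>
    (Finset.mem_union.1 hα).elim (hF α) (hG α)
  exact hGb (finInterCompl_anti Finset.subset_union_right hp)
    (hFb (finInterCompl_anti Finset.subset_union_left hp))

end IsTAlgebra

theorem self_mem_hatA (a : Ordinal → Set ℕ) (β : Ordinal) : β ∈ hatA a β :=
  ⟨le_rfl, ∅, by simp, by simp⟩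

section

variable {Γ : Set Node} {a : Node → Set ℕ}

theorem compl_mem_Ux_self {x : Node} {γ : Ordinal} (hγ : γ + 1 ≤ x.len)
    (hx : x.restrict (γ + 1) ∈ Γ) : (a (x.restrict (γ + 1)))ᶜ ∈ Ux Γ a x :=
  ⟨GenBool.compl _ (GenBool.basic _ ⟨_, hx, rfl⟩), {γ}, by simpa using hγ,
    by simp [finInterCompl]⟩

/-- On the base set avoiding `a^y_δ = ℕ ∖ a^z_δ` and the `a^z_ξ` (`ξ ∈ F`) that witness
`δ ∈ â^z_γ`, the difference `a^z_δ ∖ a^z_γ` is empty. -/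
theorem mem_Ux_of_mem_hatA {y z : Node} {δ γ : Ordinal} (hδ : δ < y.len)
    (hagree : ∀ α < δ, y.val α = z.val α)
    (hflip : a (y.restrict (δ + 1)) = (a (z.restrict (δ + 1)))ᶜ)
    (hγ : a (z.restrict (γ + 1)) ∈ BGamma Γ a) (hhat : δ ∈ hatA (branchSeq a z) γ) :
    a (z.restrict (γ + 1)) ∈ Ux Γ a y := by
  obtain ⟨-, F, hFδ, hcover⟩ := hhat
  have hFy : ∀ ξ ∈ F, y.restrict (ξ + 1) = z.restrict (ξ + 1) := fun ξ hξ =>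
    Node.restrict_eq_restrict fun α hα =>
      hagree α ((Order.lt_add_one_iff.1 hα).trans_lt (hFδ ξ hξ))
  refine ⟨hγ, insert δ F, ?_, fun p hp => ?_⟩
  · simp only [Finset.forall_mem_insert, Order.add_one_le_iff]
    exact ⟨hδ, fun ξ hξ => (hFδ ξ hξ).trans hδ⟩
  simp only [finInterCompl, Finset.mem_insert, mem_iInter, mem_compl_iff] at hp
  have hpδ : p ∈ a (z.restrict (δ + 1)) := by
    simpa [hflip] using hp δ (Or.inl rfl)
  by_contra hpγ
  obtain ⟨ξ, hξ, hpξ⟩ := mem_iUnion₂.1 (hcover ⟨hpδ, hpγ⟩)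
  exact hp ξ (Or.inr hξ) (hFy ξ hξ ▸ hpξ)

theorem IsTAlgebra.exists_mem_Ux_of_iUnion_hatA_eq (hT : IsTAlgebra Γ a) {y z : Node}
    (hy : y ∈ XGamma Γ) (hz : z ∈ XGamma Γ) (hzlen : z.len = omega1) (hne : y ≠ z)
    {T : Set Ordinal} (hcover : ⋃ γ ∈ T, hatA (branchSeq a z) γ = Iio omega1) :
    ∃ γ ∈ T, γ < omega1 ∧ a (z.restrict (γ + 1)) ∈ Ux Γ a y := by
  have hzΓ : ∀ β < omega1, z.restrict β ∈ Γ := fun β hβ => hz.2.2 β (hzlen ▸ hβ)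
  obtain ⟨δ, hδ, hagree, hδne⟩ := Node.exists_first_diff hy.2.1 hz.2.2 (hzlen ▸ hy.1) hne
  have hδω : δ < omega1 := hδ.trans_le hy.1
  obtain ⟨γ, hγT, hδγ⟩ := mem_iUnion₂.1 (hcover.ge (mem_Iio.2 hδω))
  have hγω : γ < omega1 := hcover.le (mem_biUnion hγT (self_mem_hatA _ γ))
  have hflip : a (y.restrict (δ + 1)) = (a (z.restrict (δ + 1)))ᶜ := by
    rw [Node.restrict_succ_eq_dagger hagree hδne]
    exact hT.compl_dagger _ (hzΓ _ (succ_lt_omega1 hδω)) ⟨δ, rfl⟩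
  exact ⟨γ, hγT, hγω, mem_Ux_of_mem_hatA hδ hagree hflip
    (GenBool.basic _ ⟨_, hzΓ _ (succ_lt_omega1 hγω), rfl⟩) hδγ⟩

theorem Filter.Tendsto.eventually_mem_Ux {ι : Type*} {l : Filter ι}
    {u : ι → {z : Node // z ∈ XGamma Γ}} {z : {z : Node // z ∈ XGamma Γ}}
    (hconv : Filter.Tendsto u l (@nhds _ (stoneTop Γ a) z))
    {b : Set ℕ} (hb : b ∈ BGamma Γ a) (hbz : b ∈ Ux Γ a z.1) :
    ∀ᶠ i in l, b ∈ Ux Γ a (u i).1 :=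
  hconv.eventually <| @IsOpen.mem_nhds _ (stoneTop Γ a) _ _
    (TopologicalSpace.isOpen_generateFrom_of_mem ⟨b, hb, rfl⟩) hbz

end

/-- If a `𝕋`-algebra has the ScP, then any injective sequence in `X(Γ)` converging
in the Stone topology converges to a point of `X(Γ,ℵ₀)`, i.e. of countable length. -/
theorem stmt7 (Γ : Set Node) (a : Node → Set ℕ) (hT : IsTAlgebra Γ a)
    (hScP : ∀ x : Node, x.len = omega1 → HasScP (branchDomain Γ x) (branchSeq a x))
    (u : ℕ → {z : Node // z ∈ XGamma Γ}) (hinj : Function.Injective u)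
    (z : {z : Node // z ∈ XGamma Γ})
    (hconv : Filter.Tendsto u Filter.atTop (@nhds _ (stoneTop Γ a) z)) :
    z.1.len < omega1 := by
  by_contra hlt
  have hzlen : z.1.len = omega1 := z.2.1.antisymm (not_lt.1 hlt)
  have hzΓ : ∀ γ < omega1, z.1.restrict (γ + 1) ∈ Γ := fun γ hγ =>
    z.2.2.2 _ (hzlen ▸ succ_lt_omega1 hγ)
  set P : Ordinal → ℕ → Prop := fun γ n => (a (z.1.restrict (γ + 1)))ᶜ ∈ Ux Γ a (u n).1
  have hev : ∀ γ, ∀ᶠ n in Filter.atTop, γ < omega1 → P γ n := fun γ =>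
    Filter.eventually_imp_distrib_left.2 fun hγ => hconv.eventually_mem_Ux
      (GenBool.compl _ (GenBool.basic _ ⟨_, hzΓ γ hγ, rfl⟩))
      (compl_mem_Ux_self (hzlen ▸ (succ_lt_omega1 hγ).le) (hzΓ γ hγ))
  obtain ⟨m, hm⟩ := exists_isStationaryOmega1_of_cover
    (fun m => {γ | γ < omega1 ∧ ∀ n ≥ m, P γ n}) fun γ hγ =>
      (Filter.eventually_atTop.1 (hev γ)).imp fun _ h => ⟨hγ, fun n hn => h n hn hγ⟩
  obtain ⟨F, hF⟩ := hScP z.1 hzlen (fun γ hγ => ⟨hzlen ▸ (succ_lt_omega1 hγ).le, hzΓ γ hγ⟩)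
    _ (fun γ hγ => hγ.1) hm
  have hne : ∀ᶠ n in Filter.atTop, u n ≠ z :=
    Nat.cofinite_eq_atTop ▸ hinj.tendsto_cofinite.eventually (Filter.eventually_cofinite_ne z)
  obtain ⟨n, hmn, hFn, hnz⟩ := ((Filter.eventually_ge_atTop m).and
    ((F.eventually_all.2 fun γ _ => hev γ).and hne)).exists
  obtain ⟨γ, hγ, hγω, hpos⟩ := hT.exists_mem_Ux_of_iUnion_hatA_eq (u n).2 z.2 hzlen
    (fun h => hnz (Subtype.ext h)) hF
  exact hT.compl_notMem_Ux (u n).2 hpos (hγ.elim (fun h => h.2 n hmn) (fun h => hFn γ h hγω))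

end
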